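/- arXiv:2105.12353 — 5 statements merged into one kernel-verified Lean document; each statement's English description precedes it below -/
import Mathlib

section
/- Assume τ * |𝒜| ≤ K, that for every attribute b : 𝒜 at least τ items i ∉ H satisfy a i = b, and that at least K items of Fin n lie outside H. Then the PrivateRank output list R has length exactly K and contains at least τ items of every attribute, i.e. count b R ≥ τ for every b : 𝒜; consequently its least ratio is at least τ / K. (Theorem 4.1 of the paper.) -/
open Finset

/-- Number of entries of list `R` whose attribute is `b`. -/
def countAttr {n : ℕ} {𝒜 : Type*} [DecidableEq 𝒜] (a : Fin n → 𝒜) (b : 𝒜)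
    (R : List (Fin n)) : ℕ :=
  R.countP (fun i => a i = b)

/-- `CanAdd R i` holds iff adding item `i` to the current list `R` keeps the minimum
requirement `τ` satisfiable within `K` slots. -/
def CanAdd {n : ℕ} {𝒜 : Type*} [Fintype 𝒜] [DecidableEq 𝒜] (K τ : ℕ)
    (a : Fin n → 𝒜) (R : List (Fin n)) (i : Fin n) : Prop :=
  ∑ b : 𝒜, max 0 ((τ : ℤ) - countAttr a b (R ++ [i])) ≤ (K : ℤ) - (R.length + 1)

instance {n : ℕ} {𝒜 : Type*} [Fintype 𝒜] [DecidableEq 𝒜] (K τ : ℕ)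
    (a : Fin n → 𝒜) (R : List (Fin n)) (i : Fin n) :
    Decidable (CanAdd K τ a R i) := by
  unfold CanAdd; infer_instance

/-- The PrivateRank greedy fold: process items in the order `ord`, appending an item when it is
not in `H` and `CanAdd` holds. -/
def privateRank {n : ℕ} {𝒜 : Type*} [Fintype 𝒜] [DecidableEq 𝒜] (K τ : ℕ)
    (a : Fin n → 𝒜) (H : Finset (Fin n)) (ord : List (Fin n)) : List (Fin n) :=
  ord.foldl (fun R i => if i ∉ H ∧ CanAdd K τ a R i then R ++ [i] else R) []

/-! The greedy fold keeps the slack `K - |R| - deficit R` nonnegative, where the deficit counts the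
items still missing from the quotas `τ`: this holds for `[]` because `τ * |𝒜| ≤ K`, and the slack
never increases. An item whose attribute is still below `τ` lowers the deficit by one, so under
the invariant it is always accepted; as every attribute has `τ` admissible items, every quota is
met and the output has deficit `0`. Refusing an admissible item forces the slack to be `0`, and it
stays `0`; otherwise every admissible item is taken. Either way the output has length `K`. -/

theorem countP_eq_card_filter_univ {α : Type*} [Fintype α] [DecidableEq α] {l : List α}
    (hl : ∀ x, l.count x = 1) (p : α → Prop) [DecidablePred p] :
    l.countP (fun x => p x) = (univ.filter p).card := by
  have hperm : l.Perm univ.toList := List.perm_iff_count.2 fun x => by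
    rw [hl, List.count_eq_one_of_mem (nodup_toList _) (mem_toList.2 (mem_univ x))]
  rw [hperm.countP_eq, ← Multiset.coe_countP, coe_toList, Multiset.countP_eq_card_filter]
  rfl

section PrivateRank

variable {n : ℕ} {𝒜 : Type*} [DecidableEq 𝒜]

theorem countAttr_append_singleton (a : Fin n → 𝒜) (b : 𝒜) (R : List (Fin n)) (i : Fin n) :
    countAttr a b (R ++ [i]) = countAttr a b R + if a i = b then 1 else 0 := by
  simp [countAttr, List.countP_append]

variable [Fintype 𝒜]

def deficit (τ : ℕ) (a : Fin n → 𝒜) (R : List (Fin n)) : ℤ :=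
  ∑ b : 𝒜, max 0 ((τ : ℤ) - countAttr a b R)

/-- `CanAdd R i` says exactly that `R ++ [i]` has nonnegative slack. -/
def slack (K τ : ℕ) (a : Fin n → 𝒜) (R : List (Fin n)) : ℤ :=
  K - R.length - deficit τ a R

def privateRankStep (K τ : ℕ) (a : Fin n → 𝒜) (H : Finset (Fin n)) (R : List (Fin n))
    (i : Fin n) : List (Fin n) :=
  if i ∉ H ∧ CanAdd K τ a R i then R ++ [i] else R

variable {K τ : ℕ} {a : Fin n → 𝒜} {H : Finset (Fin n)}

theorem privateRank_eq_foldl (ord : List (Fin n)) :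
    privateRank K τ a H ord = ord.foldl (privateRankStep K τ a H) [] :=
  rfl

theorem deficit_append_singleton (R : List (Fin n)) (i : Fin n) :
    deficit τ a (R ++ [i]) = deficit τ a R - if countAttr a (a i) R < τ then 1 else 0 := by
  have hterm : ∀ b, max 0 ((τ : ℤ) - countAttr a b (R ++ [i])) =
      max 0 ((τ : ℤ) - countAttr a b R) -
        if b = a i then (if countAttr a (a i) R < τ then 1 else 0) else 0 := by
    intro b
    rw [countAttr_append_singleton]
    by_cases hb : b = a i
    · subst hb
      split_ifs <;> push_cast <;> omega
    · simp [hb, Ne.symm hb]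
  simp only [deficit, hterm, sum_sub_distrib, sum_ite_eq', mem_univ, if_true]

theorem deficit_nil : deficit τ a ([] : List (Fin n)) = τ * Fintype.card 𝒜 := by
  simp [deficit, countAttr, mul_comm]

theorem deficit_eq_zero_of_forall_le_countAttr {R : List (Fin n)}
    (h : ∀ b, τ ≤ countAttr a b R) : deficit τ a R = 0 :=
  sum_eq_zero fun b _ => max_eq_left (by have := h b; omega)

theorem slack_nil : slack K τ a ([] : List (Fin n)) = K - τ * Fintype.card 𝒜 := by
  simp [slack, deficit_nil]

theorem slack_append_singleton (R : List (Fin n)) (i : Fin n) :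
    slack K τ a (R ++ [i]) = slack K τ a R - if countAttr a (a i) R < τ then 0 else 1 := by
  simp only [slack, deficit_append_singleton, List.length_append, List.length_singleton]
  split_ifs <;> push_cast <;> ring

theorem canAdd_iff_slack_nonneg (R : List (Fin n)) (i : Fin n) :
    CanAdd K τ a R i ↔ 0 ≤ slack K τ a (R ++ [i]) := by
  simp only [slack, List.length_append, List.length_singleton]
  change deficit τ a (R ++ [i]) ≤ _ ↔ _
  push_cast
  constructor <;> intro h <;> linarith

theorem canAdd_of_countAttr_lt {R : List (Fin n)} (hR : 0 ≤ slack K τ a R) {i : Fin n}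
    (hi : countAttr a (a i) R < τ) : CanAdd K τ a R i := by
  rwa [canAdd_iff_slack_nonneg, slack_append_singleton, if_pos hi, sub_zero]

theorem slack_eq_zero_of_not_canAdd {R : List (Fin n)} (hR : 0 ≤ slack K τ a R) {i : Fin n}
    (hi : ¬CanAdd K τ a R i) : slack K τ a R = 0 := by
  rw [canAdd_iff_slack_nonneg, slack_append_singleton] at hi
  split_ifs at hi <;> omega

theorem slack_step_nonneg {R : List (Fin n)} (hR : 0 ≤ slack K τ a R) (i : Fin n) :
    0 ≤ slack K τ a (privateRankStep K τ a H R i) := by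
  unfold privateRankStep
  split_ifs with h
  · exact (canAdd_iff_slack_nonneg R i).1 h.2
  · exact hR

theorem slack_step_le (R : List (Fin n)) (i : Fin n) :
    slack K τ a (privateRankStep K τ a H R i) ≤ slack K τ a R := by
  unfold privateRankStep
  split_ifs
  · rw [slack_append_singleton]
    split_ifs <;> omega
  · exact le_rfl

theorem countAttr_le_step (b : 𝒜) (R : List (Fin n)) (i : Fin n) :
    countAttr a b R ≤ countAttr a b (privateRankStep K τ a H R i) := by
  unfold privateRankStep
  split_ifs
  · rw [countAttr_append_singleton]
    omega
  · exact le_rfl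

theorem min_le_countAttr_step (b : 𝒜) {R : List (Fin n)} (hR : 0 ≤ slack K τ a R) (i : Fin n) :
    min τ (countAttr a b R + if i ∉ H ∧ a i = b then 1 else 0) ≤
      countAttr a b (privateRankStep K τ a H R i) := by
  have hmono := countAttr_le_step (K := K) (τ := τ) (a := a) (H := H) b R i
  by_cases hi : i ∉ H ∧ a i = b
  · by_cases hlt : countAttr a b R < τ
    · have hcan : CanAdd K τ a R i := canAdd_of_countAttr_lt hR (hi.2 ▸ hlt)
      rw [if_pos hi, privateRankStep, if_pos ⟨hi.1, hcan⟩, countAttr_append_singleton,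
        if_pos hi.2]
      omega
    · omega
  · rw [if_neg hi]
    omega

theorem slack_foldl_nonneg (l : List (Fin n)) {R : List (Fin n)} (hR : 0 ≤ slack K τ a R) :
    0 ≤ slack K τ a (l.foldl (privateRankStep K τ a H) R) := by
  induction l generalizing R with
  | nil => exact hR
  | cons i l ih => exact ih (slack_step_nonneg hR i)

theorem slack_foldl_le (l : List (Fin n)) (R : List (Fin n)) :
    slack K τ a (l.foldl (privateRankStep K τ a H) R) ≤ slack K τ a R := by
  induction l generalizing R with
  | nil => exact le_rfl
  | cons i l ih => exact (ih _).trans (slack_step_le R i)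

theorem slack_foldl_eq_zero_or_eq_append_filter (l : List (Fin n)) {R : List (Fin n)}
    (hR : 0 ≤ slack K τ a R) :
    slack K τ a (l.foldl (privateRankStep K τ a H) R) = 0 ∨
      l.foldl (privateRankStep K τ a H) R = R ++ l.filter (fun i => i ∉ H) := by
  induction l generalizing R with
  | nil => simp
  | cons i l ih =>
    rw [List.foldl_cons]
    by_cases hiH : i ∈ H
    · have hstep : privateRankStep K τ a H R i = R := if_neg fun h => h.1 hiH
      rw [hstep, List.filter_cons_of_neg (by simpa using hiH)]
      exact ih hR
    by_cases hcan : CanAdd K τ a R i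
    · have hstep : privateRankStep K τ a H R i = R ++ [i] := if_pos ⟨hiH, hcan⟩
      rw [hstep, List.filter_cons_of_pos (by simpa using hiH)]
      have hR' : 0 ≤ slack K τ a (R ++ [i]) := hstep ▸ slack_step_nonneg hR i
      simpa using ih hR'
    · have hstep : privateRankStep K τ a H R i = R := if_neg fun h => hcan h.2
      rw [hstep]
      refine Or.inl (le_antisymm ?_ (slack_foldl_nonneg l hR))
      exact (slack_foldl_le l R).trans (slack_eq_zero_of_not_canAdd hR hcan).le

theorem min_le_countAttr_foldl (b : 𝒜) (l : List (Fin n)) {R : List (Fin n)}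
    (hR : 0 ≤ slack K τ a R) :
    min τ (countAttr a b R + l.countP (fun i => i ∉ H ∧ a i = b)) ≤
      countAttr a b (l.foldl (privateRankStep K τ a H) R) := by
  induction l generalizing R with
  | nil => simp
  | cons i l ih =>
    have hstep := min_le_countAttr_step (H := H) b hR i
    have hrest := ih (slack_step_nonneg (H := H) hR i)
    rw [List.countP_cons, List.foldl_cons]
    simp only [decide_eq_true_eq] at hstep hrest ⊢
    omega

end PrivateRank

/-- Theorem 4.1: the PrivateRank output has length `K`, contains at least `τ` items of every
sensitive attribute, and hence its least ratio is at least `τ / K`. -/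
theorem privateRank_fairness
    (n K τ : ℕ) (𝒜 : Type*) [Fintype 𝒜] [DecidableEq 𝒜] [Nonempty 𝒜]
    (a : Fin n → 𝒜) (H : Finset (Fin n)) (ord : List (Fin n))
    (hord : ∀ i : Fin n, ord.count i = 1)
    (hτK : τ * Fintype.card 𝒜 ≤ K)
    (hattr : ∀ b : 𝒜, τ ≤ (univ.filter (fun i : Fin n => i ∉ H ∧ a i = b)).card)
    (hK : K ≤ (univ.filter (fun i : Fin n => i ∉ H)).card) :
    (privateRank K τ a H ord).length = K ∧
    (∀ b : 𝒜, τ ≤ countAttr a b (privateRank K τ a H ord)) ∧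
    (τ : ℝ) / K ≤
      (univ.inf' univ_nonempty
        (fun b : 𝒜 => (countAttr a b (privateRank K τ a H ord) : ℝ))) / K := by
  rw [privateRank_eq_foldl]
  have hslack : 0 ≤ slack K τ a ([] : List (Fin n)) := by
    rw [slack_nil, sub_nonneg]
    exact_mod_cast hτK
  have hnonneg := slack_foldl_nonneg (H := H) ord hslack
  have hmin := fun b => min_le_countAttr_foldl (H := H) b ord hslack
  have hcases := slack_foldl_eq_zero_or_eq_append_filter (H := H) ord hslack
  generalize ord.foldl (privateRankStep K τ a H) [] = F at hnonneg hmin hcases ⊢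
  have hcount : ∀ b, τ ≤ countAttr a b F := fun b => by
    have h := hmin b
    rw [countP_eq_card_filter_univ hord, show countAttr a b [] = 0 from rfl, zero_add] at h
    have := hattr b
    omega
  have hdeficit := deficit_eq_zero_of_forall_le_countAttr hcount
  rw [slack, hdeficit] at hnonneg
  have hlen : F.length = K := by
    rcases hcases with h | h
    · rw [slack, hdeficit] at h
      omega
    · have hall : F.length = (univ.filter fun i : Fin n => i ∉ H).card := by
        rw [h, List.nil_append, ← List.countP_eq_length_filter, countP_eq_card_filter_univ hord]
      omega
  refine ⟨hlen, hcount, div_le_div_of_nonneg_right ?_ K.cast_nonneg⟩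
  exact le_inf' _ _ fun b _ => by exact_mod_cast hcount b
end

section
/- Assume K ≥ 2, L ≥ 1 and 0 < c < 1/((K+1)² · (log(K+1))²). Then for every item i the truncated personalized PageRank vector Ŝ_i ranks the provider's recommendations first and in the same order: (a) Ŝ_i (P i k) > Ŝ_i (P i k') whenever k < k' (k, k' : Fin K); and (b) Ŝ_i (P i k) > Ŝ_i l for every k : Fin K and every item l ≠ i with l ∉ { P i k' : k' : Fin K }. Consequently the K largest entries of Ŝ_i among items different from i are attained exactly at P i 0, …, P i (K−1), in this order, so PrivateRank with minimum requirement τ = 0 outputs the same top-K recommendation list as the provider recommender system. (Theorem 4.2 of the paper.) -/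
open Finset Matrix

/-- The normalizing constant `D = ∑_{r=1}^{K} 1 / log (r+1)`. -/
noncomputable def Dconst (K : ℕ) : ℝ := ∑ r ∈ Finset.Icc 1 K, 1 / Real.log ((r : ℝ) + 1)

/-- The weighted adjacency matrix of the recommendation network: `A i j = 1 / log (k+2)` if
`P i k = j` for some (necessarily unique, by injectivity) rank `k : Fin K`, and `0` otherwise. -/
noncomputable def adj {n K : ℕ} (P : Fin n → Fin K → Fin n) :
    Matrix (Fin n) (Fin n) ℝ := fun i j =>
  ∑ k : Fin K, if P i k = j then 1 / Real.log (((k : ℕ) : ℝ) + 2) else 0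

/-- The row-normalized adjacency matrix `Ã = D⁻¹ • A`. -/
noncomputable def normAdj {n K : ℕ} (P : Fin n → Fin K → Fin n) :
    Matrix (Fin n) (Fin n) ℝ :=
  (Dconst K)⁻¹ • adj P

/-- The truncated personalized PageRank vector
`Ŝ_i = (1-c) • ((∑_{k=0}^{L} (c • Ãᵀ)^k) *ᵥ e_i)`. -/
noncomputable def pprTrunc {n K : ℕ} (P : Fin n → Fin K → Fin n) (c : ℝ) (L : ℕ)
    (i : Fin n) : Fin n → ℝ :=
  (1 - c) • ((∑ k ∈ Finset.range (L + 1), (c • (normAdj P)ᵀ) ^ k) *ᵥ Pi.single i 1)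

/-!
For `j ≠ i`, `Ŝ_i j / (1 - c) = c Ã i j + ∑_{m ≥ 2} c^m (Ã^m) i j`, and since `Ã` is row
stochastic the tail lies in `[0, c² / (1 - c)]`. So `Ŝ_i` orders two items `j ≠ i` as `Ã i ·`
does as soon as their weights differ by more than `c / (1 - c)`. The rank weights
`1 / log a > 1 / log b` (`2 ≤ a < b ≤ K + 1`) differ by at least `1 / ((K+1) log² (K+1))`,
because `log b - log a ≥ 1 - a / b ≥ 1 / (K+1)` and `log a log b ≤ log² (K+1)`, and they exceed
the weight `0` of an unranked item by as much. The hypothesis on `c` makes `c / (1 - c)` smaller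
than this gap divided by `D ≤ K + 1/2`.
-/

open Real

namespace Matrix

variable {ι : Type*} [Fintype ι] [DecidableEq ι]

lemma sum_range_pow_apply_of_ne {R : Type*} [CommSemiring R] (M : Matrix ι ι R) (c : R)
    (L : ℕ) {i j : ι} (hij : i ≠ j) :
    ∑ m ∈ range (L + 2), c ^ m * (M ^ m) i j
      = c * M i j + ∑ m ∈ Ico 2 (L + 2), c ^ m * (M ^ m) i j := by
  rw [← sum_range_add_sum_Ico _ (by omega : 2 ≤ L + 2)]
  simp [sum_range_succ, one_apply_ne hij]

lemma sum_Ico_pow_apply_le_of_mem_rowStochastic {M : Matrix ι ι ℝ}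
    (hM : M ∈ rowStochastic ℝ ι) {c : ℝ} (hc0 : 0 ≤ c) (hc1 : c < 1) (a b : ℕ) (i j : ι) :
    ∑ m ∈ Ico a b, c ^ m * (M ^ m) i j ≤ c ^ a / (1 - c) :=
  calc ∑ m ∈ Ico a b, c ^ m * (M ^ m) i j
      ≤ ∑ m ∈ Ico a b, c ^ m := sum_le_sum fun m _ =>
        mul_le_of_le_one_right (pow_nonneg hc0 m)
          (le_one_of_mem_rowStochastic (pow_mem hM m))
    _ ≤ c ^ a / (1 - c) := geom_sum_Ico_le_of_lt_one hc0 hc1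

lemma sum_range_pow_apply_lt_of_gap {M : Matrix ι ι ℝ} (hM : M ∈ rowStochastic ℝ ι)
    {c : ℝ} (hc0 : 0 < c) (hc1 : c < 1) (L : ℕ) {i j₁ j₂ : ι} (h₁ : i ≠ j₁) (h₂ : i ≠ j₂)
    (hgap : M i j₂ + c / (1 - c) < M i j₁) :
    ∑ m ∈ range (L + 2), c ^ m * (M ^ m) i j₂ < ∑ m ∈ range (L + 2), c ^ m * (M ^ m) i j₁ := by
  rw [sum_range_pow_apply_of_ne M c L h₁, sum_range_pow_apply_of_ne M c L h₂]
  have htail₁ : 0 ≤ ∑ m ∈ Ico 2 (L + 2), c ^ m * (M ^ m) i j₁ :=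
    sum_nonneg fun m _ =>
      mul_nonneg (pow_nonneg hc0.le m) (nonneg_of_mem_rowStochastic (pow_mem hM m))
  have htail₂ := sum_Ico_pow_apply_le_of_mem_rowStochastic hM hc0.le hc1 2 (L + 2) i j₂
  have hscaled : c * M i j₂ + c ^ 2 / (1 - c) < c * M i j₁ := by
    have h := mul_lt_mul_of_pos_left hgap hc0
    rwa [mul_add, ← mul_div_assoc, ← sq] at h
  linarith

end Matrix

lemma one_div_mul_log_sq_le_one_div_log_sub {a b x : ℝ} (ha : 1 < a) (hab : a + 1 ≤ b)
    (hbx : b ≤ x) : 1 / (x * log x ^ 2) ≤ 1 / log a - 1 / log b := by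
  have ha0 : 0 < a := by linarith
  have hb0 : 0 < b := by linarith
  have hla : 0 < log a := log_pos ha
  have hlb : 0 < log b := log_pos (by linarith)
  have hlbx : log b ≤ log x := log_le_log hb0 hbx
  have hlab : log a ≤ log b := log_le_log ha0 (by linarith)
  have hlog_diff : 1 / x ≤ log b - log a :=
    calc 1 / x ≤ 1 / b := one_div_le_one_div_of_le hb0 hbx
      _ ≤ 1 - (b / a)⁻¹ := by
        rw [inv_div, one_sub_div hb0.ne', div_le_div_iff_of_pos_right hb0]
        linarith
      _ ≤ log (b / a) := one_sub_inv_le_log_of_pos (by positivity)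
      _ = log b - log a := log_div hb0.ne' ha0.ne'
  calc 1 / (x * log x ^ 2) = (1 / x) / log x ^ 2 := by rw [div_div]
    _ ≤ (log b - log a) / (log a * log b) :=
      div_le_div₀ (by linarith) hlog_diff (by positivity) (by nlinarith)
    _ = 1 / log a - 1 / log b := by field_simp

lemma one_lt_log_of_three_le {x : ℝ} (hx : 3 ≤ x) : 1 < log x :=
  (lt_log_iff_exp_lt (by linarith)).2 (exp_one_lt_three.trans_le hx)

lemma Dconst_eq_sum_range (K : ℕ) : Dconst K = ∑ k ∈ range K, 1 / log ((k : ℝ) + 2) := by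
  rw [Dconst, ← Ico_add_one_right_eq_Icc, sum_Ico_eq_sum_range]
  refine sum_congr rfl fun k _ => ?_
  push_cast
  ring_nf

lemma Dconst_pos {K : ℕ} (hK : 1 ≤ K) : 0 < Dconst K := by
  rw [Dconst_eq_sum_range]
  exact sum_pos (fun k _ => one_div_pos.2 (log_pos (by linarith [k.cast_nonneg (α := ℝ)])))
    (nonempty_range_iff.2 (by omega))

lemma Dconst_le_add_half {K : ℕ} (hK : 1 ≤ K) : Dconst K ≤ K + 1 / 2 := by
  induction K, hK using Nat.le_induction with
  | base =>
    have hlog2 := log_two_gt_d9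
    rw [Dconst_eq_sum_range, sum_range_one, Nat.cast_zero, zero_add,
      div_le_iff₀ (log_pos one_lt_two)]
    norm_num
    linarith
  | succ K hK ih =>
    have hlog : 1 < log ((K : ℝ) + 2) :=
      one_lt_log_of_three_le (by linarith [(Nat.one_le_cast (α := ℝ)).2 hK])
    have hterm : 1 / log ((K : ℝ) + 2) ≤ 1 := (div_le_one (by linarith)).2 hlog.le
    rw [Dconst_eq_sum_range, sum_range_succ, ← Dconst_eq_sum_range]
    push_cast
    linarith

section Recommender

variable {n K : ℕ} (P : Fin n → Fin K → Fin n)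

lemma adj_apply_rank {i : Fin n} (hinj : Function.Injective (P i)) (k : Fin K) :
    adj P i (P i k) = 1 / log ((k : ℝ) + 2) := by
  unfold adj
  rw [sum_eq_single k (fun k' _ hk' => if_neg fun h => hk' (hinj h)) (by simp)]
  simp

lemma adj_apply_of_forall_ne {i l : Fin n} (hl : ∀ k, P i k ≠ l) : adj P i l = 0 :=
  sum_eq_zero fun k _ => if_neg (hl k)

lemma sum_adj_row (i : Fin n) : ∑ j, adj P i j = Dconst K := by
  unfold adj
  rw [sum_comm, Dconst_eq_sum_range, ← Fin.sum_univ_eq_sum_range]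
  simp

lemma normAdj_mem_rowStochastic (hK : 1 ≤ K) : normAdj P ∈ rowStochastic ℝ (Fin n) := by
  refine mem_rowStochastic_iff_sum.2 ⟨fun i j => ?_, fun i => ?_⟩
  · refine mul_nonneg (inv_nonneg.2 (Dconst_pos hK).le) (sum_nonneg fun k _ => ?_)
    split_ifs
    exacts [one_div_nonneg.2 (log_nonneg (by linarith [k.val.cast_nonneg (α := ℝ)])), le_rfl]
  · simp only [normAdj, Matrix.smul_apply, smul_eq_mul, ← mul_sum, sum_adj_row]
    exact inv_mul_cancel₀ (Dconst_pos hK).ne'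

lemma pprTrunc_apply (c : ℝ) (L : ℕ) (i j : Fin n) :
    pprTrunc P c L i j = (1 - c) * ∑ m ∈ range (L + 1), c ^ m * (normAdj P ^ m) i j := by
  simp only [pprTrunc, mulVec_single, Pi.smul_apply, smul_eq_mul, MulOpposite.op_one,
    one_smul, col_apply, Matrix.sum_apply, smul_pow, Matrix.smul_apply, ← transpose_pow,
    transpose_apply]

lemma pprTrunc_lt_of_gap (hK : 1 ≤ K) {c : ℝ} (hc0 : 0 < c) (hc1 : c < 1) (L : ℕ)
    {i j₁ j₂ : Fin n} (h₁ : j₁ ≠ i) (h₂ : j₂ ≠ i)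
    (hgap : normAdj P i j₂ + c / (1 - c) < normAdj P i j₁) :
    pprTrunc P c (L + 1) i j₂ < pprTrunc P c (L + 1) i j₁ := by
  rw [pprTrunc_apply, pprTrunc_apply]
  exact mul_lt_mul_of_pos_left (sum_range_pow_apply_lt_of_gap
    (normAdj_mem_rowStochastic P hK) hc0 hc1 L h₁.symm h₂.symm hgap) (by linarith)

noncomputable def rankGap (K : ℕ) : ℝ :=
  (Dconst K)⁻¹ * (1 / ((K + 1) * log (K + 1) ^ 2))

lemma normAdj_apply_rank {i : Fin n} (hinj : Function.Injective (P i)) (k : Fin K) :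
    normAdj P i (P i k) = (Dconst K)⁻¹ * (1 / log ((k : ℝ) + 2)) := by
  rw [normAdj, Matrix.smul_apply, adj_apply_rank P hinj, smul_eq_mul]

lemma normAdj_rank_add_rankGap_le (hK : 1 ≤ K) {i : Fin n} (hinj : Function.Injective (P i))
    {k k' : Fin K} (hkk' : k < k') :
    normAdj P i (P i k') + rankGap K ≤ normAdj P i (P i k) := by
  have hgap := one_div_mul_log_sq_le_one_div_log_sub (a := (k : ℝ) + 2) (b := (k' : ℝ) + 2)
    (x := K + 1) (by linarith [k.val.cast_nonneg (α := ℝ)])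
    (by linarith [show (k : ℝ) + 1 ≤ k' by exact_mod_cast hkk'])
    (by linarith [show (k' : ℝ) + 1 ≤ K by exact_mod_cast k'.isLt])
  rw [normAdj_apply_rank P hinj, normAdj_apply_rank P hinj, rankGap, ← mul_add]
  exact mul_le_mul_of_nonneg_left (by linarith) (inv_nonneg.2 (Dconst_pos hK).le)

lemma normAdj_add_rankGap_le (hK : 2 ≤ K) {i l : Fin n} (hinj : Function.Injective (P i))
    (hl : ∀ k, P i k ≠ l) (k : Fin K) :
    normAdj P i l + rankGap K ≤ normAdj P i (P i k) := by
  have hK3 : (3 : ℝ) ≤ K + 1 := by linarith [(Nat.ofNat_le_cast (α := ℝ)).2 hK]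
  have hlogK := one_lt_log_of_three_le hK3
  have hlogk : 0 < log ((k : ℝ) + 2) := log_pos (by linarith [k.val.cast_nonneg (α := ℝ)])
  have hlogk_le : log ((k : ℝ) + 2) ≤ log (K + 1) :=
    log_le_log (by positivity) (by linarith [show (k : ℝ) + 1 ≤ K by exact_mod_cast k.isLt])
  have hgap : 1 / ((K + 1) * log (K + 1) ^ 2) ≤ 1 / log ((k : ℝ) + 2) :=
    one_div_le_one_div_of_le hlogk (by nlinarith)
  rw [show normAdj P i l = 0 by simp [normAdj, adj_apply_of_forall_ne P hl], zero_add,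
    normAdj_apply_rank P hinj, rankGap]
  exact mul_le_mul_of_nonneg_left hgap (inv_nonneg.2 (Dconst_pos (by omega)).le)

end Recommender

lemma lt_one_and_div_one_sub_lt_rankGap {K : ℕ} (hK : 2 ≤ K) {c : ℝ} (hc0 : 0 < c)
    (hc1 : c < 1 / (((K : ℝ) + 1) ^ 2 * log ((K : ℝ) + 1) ^ 2)) :
    c < 1 ∧ c / (1 - c) < rankGap K := by
  have hK3 : (3 : ℝ) ≤ K + 1 := by linarith [(Nat.ofNat_le_cast (α := ℝ)).2 hK]
  have hlog := one_lt_log_of_three_le hK3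
  have hD0 := Dconst_pos (by omega : 1 ≤ K)
  have hDle := Dconst_le_add_half (by omega : 1 ≤ K)
  set E := Dconst K * ((K + 1) * log (K + 1) ^ 2) with hE
  have hE0 : 0 < E := by positivity
  have hEM : E + 1 ≤ ((K : ℝ) + 1) ^ 2 * log ((K : ℝ) + 1) ^ 2 := by
    have h3 : 3 ≤ ((K : ℝ) + 1) * log (K + 1) ^ 2 := by nlinarith
    have : E ≤ (K + 1 / 2) * ((K + 1) * log (K + 1) ^ 2) :=
      mul_le_mul_of_nonneg_right hDle (by positivity)
    nlinarith
  have hcE : c * (E + 1) < 1 := by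
    rw [lt_div_iff₀ (by positivity)] at hc1
    nlinarith
  have hc_lt_one : c < 1 := by nlinarith
  refine ⟨hc_lt_one, ?_⟩
  have hrankGap : rankGap K = 1 / E := by rw [rankGap, hE]; field_simp
  rw [hrankGap, div_lt_div_iff₀ (by linarith) hE0]
  linarith

/-- Theorem 4.2: for a small enough damping factor, the truncated personalized PageRank vector
`Ŝ_i` ranks the provider's recommendations first and in the same order, so PrivateRank with
minimum requirement `τ = 0` outputs the same top-`K` list as the provider recommender system. -/
theorem pprTrunc_preserves_provider_ranking
    (n K : ℕ) (hK : 2 ≤ K) (P : Fin n → Fin K → Fin n)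
    (hinj : ∀ i, Function.Injective (P i))
    (hne : ∀ i k, P i k ≠ i)
    (c : ℝ) (L : ℕ) (hL : 1 ≤ L)
    (hc0 : 0 < c)
    (hc1 : c < 1 / (((K : ℝ) + 1) ^ 2 * Real.log ((K : ℝ) + 1) ^ 2)) :
    (∀ (i : Fin n) (k k' : Fin K), k < k' →
        pprTrunc P c L i (P i k') < pprTrunc P c L i (P i k)) ∧
    (∀ (i : Fin n) (k : Fin K) (l : Fin n), l ≠ i → (∀ k' : Fin K, P i k' ≠ l) →
        pprTrunc P c L i l < pprTrunc P c L i (P i k)) := by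
  obtain ⟨L, rfl⟩ : ∃ L', L = L' + 1 := ⟨L - 1, by omega⟩
  obtain ⟨hc_lt_one, hc_gap⟩ := lt_one_and_div_one_sub_lt_rankGap hK hc0 hc1
  refine ⟨fun i k k' hkk' => ?_, fun i k l hl hlP => ?_⟩
  · refine pprTrunc_lt_of_gap P (by omega) hc0 hc_lt_one L (hne i k) (hne i k') ?_
    linarith [normAdj_rank_add_rankGap_le P (by omega) (hinj i) hkk']
  · refine pprTrunc_lt_of_gap P (by omega) hc0 hc_lt_one L (hne i k) hl ?_
    linarith [normAdj_add_rankGap_le P hK (hinj i) hlP k]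
end

section
/- Assume τ * |𝒜| ≤ K. For 0 ≤ j ≤ n let R_j denote the list built by the greedy fold after processing the first j entries of ord. Then the deficiency invariant ∑_{b : 𝒜} max(0, (τ : ℤ) − count b R_j) ≤ K − (R_j).length holds for every j; in particular (R_j).length ≤ K for every j. -/
/-!
The quantity `∑_b max(0, τ - count b R)` counts the slots that must still be reserved to reach
`τ` items of every attribute. Initially it equals `τ |𝒜| ≤ K`, and `CanAdd` admits an item exactly
when the invariant "deficiency ≤ remaining slots" holds after appending it, so every step of the
fold preserves the invariant. Since the deficiency is nonnegative, the invariant bounds the length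
by `K`.
-/

open Finset

section Deficiency

variable {n : ℕ} {𝒜 : Type*} [Fintype 𝒜] [DecidableEq 𝒜] (K τ : ℕ) (a : Fin n → 𝒜)

def deficiency (R : List (Fin n)) : ℤ :=
  ∑ b : 𝒜, max 0 ((τ : ℤ) - countAttr a b R)

def DeficiencyInvariant (R : List (Fin n)) : Prop :=
  deficiency τ a R ≤ (K : ℤ) - R.length

lemma deficiency_nonneg (R : List (Fin n)) : 0 ≤ deficiency τ a R :=
  Finset.sum_nonneg fun _ _ => le_max_left _ _

variable {K τ a}

lemma deficiency_nil : deficiency τ a ([] : List (Fin n)) = τ * Fintype.card 𝒜 := by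
  simp [deficiency, countAttr, mul_comm]

lemma deficiencyInvariant_nil (hτK : τ * Fintype.card 𝒜 ≤ K) :
    DeficiencyInvariant K τ a ([] : List (Fin n)) := by
  rw [DeficiencyInvariant, deficiency_nil, List.length_nil, Nat.cast_zero, sub_zero]
  exact_mod_cast hτK

lemma DeficiencyInvariant.length_le {R : List (Fin n)} (h : DeficiencyInvariant K τ a R) :
    R.length ≤ K := by
  have := deficiency_nonneg τ a R
  unfold DeficiencyInvariant at h
  omega

lemma CanAdd.deficiencyInvariant_append {R : List (Fin n)} {i : Fin n} (h : CanAdd K τ a R i) :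
    DeficiencyInvariant K τ a (R ++ [i]) := by
  rw [DeficiencyInvariant, List.length_append, List.length_singleton, Nat.cast_add, Nat.cast_one]
  exact h

lemma deficiencyInvariant_privateRank (H : Finset (Fin n)) (ord : List (Fin n))
    (hτK : τ * Fintype.card 𝒜 ≤ K) : DeficiencyInvariant K τ a (privateRank K τ a H ord) := by
  refine List.foldlRecOn ord _ (deficiencyInvariant_nil hτK) fun R hR i _ => ?_
  split_ifs with hi
  · exact hi.2.deficiencyInvariant_append
  · exact hR

end Deficiency

theorem privateRank_deficiency_general
    (n K τ : ℕ) (𝒜 : Type*) [Fintype 𝒜] [DecidableEq 𝒜]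
    (a : Fin n → 𝒜) (H : Finset (Fin n)) (ord : List (Fin n))
    (hτK : τ * Fintype.card 𝒜 ≤ K) :
    ∀ j : ℕ, j ≤ n →
      (∑ b : 𝒜, max 0 ((τ : ℤ) - countAttr a b (privateRank K τ a H (ord.take j)))
          ≤ (K : ℤ) - (privateRank K τ a H (ord.take j)).length) ∧
      (privateRank K τ a H (ord.take j)).length ≤ K := by
  intro j _
  have hinv := deficiencyInvariant_privateRank (a := a) H (ord.take j) hτK
  exact ⟨hinv, hinv.length_le⟩

/-- The deficiency invariant: after processing the first `j` entries of `ord`, the total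
deficiency `∑_b max(0, τ - count b R_j)` is at most the number `K - |R_j|` of remaining slots;
in particular the list never exceeds length `K`. -/
theorem privateRank_deficiency
    (n K τ : ℕ) (𝒜 : Type*) [Fintype 𝒜] [DecidableEq 𝒜] [Nonempty 𝒜]
    (a : Fin n → 𝒜) (H : Finset (Fin n)) (ord : List (Fin n))
    (hord : ∀ i : Fin n, ord.count i = 1)
    (hτK : τ * Fintype.card 𝒜 ≤ K) :
    ∀ j : ℕ, j ≤ n →
      (∑ b : 𝒜, max 0 ((τ : ℤ) - countAttr a b (privateRank K τ a H (ord.take j)))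
          ≤ (K : ℤ) - (privateRank K τ a H (ord.take j)).length) ∧
      (privateRank K τ a H (ord.take j)).length ≤ K :=
  privateRank_deficiency_general n K τ 𝒜 a H ord hτK
end

section
/- Let M : Matrix (Fin n) (Fin n) ℝ have nonnegative entries with every row summing to 1 (row-stochastic), and let 0 < c < 1. Then the matrix 1 − c • Mᵀ is invertible, and for every i : Fin n the vector S_i := (1−c) • ((1 − c • Mᵀ)⁻¹ *ᵥ e_i) is the unique vector S ∈ (Fin n → ℝ) satisfying the personalized PageRank equation S = c • (Mᵀ *ᵥ S) + (1−c) • e_i. -/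
open Matrix

/-!
For `|c| < 1`, a nonnegative matrix `M` with row sums at most `1` makes `1 - c • M` strictly
diagonally dominant by rows: the off-diagonal part of row `k` has absolute sum at most
`|c| (1 - M k k) < 1 - |c| M k k ≤ |1 - c M k k|`. By Gershgorin its determinant is nonzero, hence so
is that of the transpose `1 - c • Mᵀ`, and the PageRank equation is the linear system
`(1 - c • Mᵀ) *ᵥ S = (1 - c) • e_i`.
-/

variable {ι : Type*} [Fintype ι] [DecidableEq ι]

theorem Matrix.isUnit_one_sub_smul_of_nonneg_of_sum_le_one (M : Matrix ι ι ℝ)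
    (hnn : ∀ i j, 0 ≤ M i j) (hrow : ∀ i, ∑ j, M i j ≤ 1) {c : ℝ} (hc : |c| < 1) :
    IsUnit (1 - c • M) := by
  rw [isUnit_iff_isUnit_det, isUnit_iff_ne_zero]
  refine det_ne_zero_of_sum_row_lt_diag fun k => ?_
  have hoff : ∑ j ∈ Finset.univ.erase k, M k j ≤ 1 - M k k := by
    rw [Finset.sum_erase_eq_sub (Finset.mem_univ k)]
    linarith [hrow k]
  calc ∑ j ∈ Finset.univ.erase k, ‖(1 - c • M) k j‖
      = |c| * ∑ j ∈ Finset.univ.erase k, M k j := by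
        rw [Finset.mul_sum]
        refine Finset.sum_congr rfl fun j hj => ?_
        rw [sub_apply, smul_apply, one_apply_ne (Finset.ne_of_mem_erase hj).symm, zero_sub,
          norm_neg, Real.norm_eq_abs, smul_eq_mul, abs_mul, abs_of_nonneg (hnn k j)]
    _ ≤ |c| * (1 - M k k) := mul_le_mul_of_nonneg_left hoff (abs_nonneg c)
    _ < 1 - |c| * M k k := by linarith
    _ ≤ ‖(1 - c • M) k k‖ := by
        rw [sub_apply, smul_apply, one_apply_eq, smul_eq_mul, Real.norm_eq_abs]
        calc 1 - |c| * M k k ≤ 1 - c * M k k :=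
              sub_le_sub_left (mul_le_mul_of_nonneg_right (le_abs_self c) (hnn k k)) 1
          _ ≤ |1 - c * M k k| := le_abs_self _

section CommRing

variable {R : Type*} [CommRing R]

theorem Matrix.mulVec_eq_iff_eq_inv_mulVec {A : Matrix ι ι R} (hA : IsUnit A) {x b : ι → R} :
    A *ᵥ x = b ↔ x = A⁻¹ *ᵥ b := by
  have := hA.invertible
  refine ⟨fun h => (inv_mulVec_eq_vec h.symm).symm, fun h => ?_⟩
  rw [h, mulVec_mulVec, mul_inv_of_invertible, one_mulVec]

theorem Matrix.eq_smul_mulVec_add_iff (B : Matrix ι ι R) (c : R) (x b : ι → R) :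
    x = c • (B *ᵥ x) + b ↔ (1 - c • B) *ᵥ x = b := by
  rw [sub_mulVec, one_mulVec, smul_mulVec, sub_eq_iff_eq_add, add_comm]

end CommRing

/-- For a row-stochastic matrix `M` and damping factor `0 < c < 1`, the matrix `1 - c • Mᵀ`
is invertible, and `S_i = (1-c) • ((1 - c • Mᵀ)⁻¹ *ᵥ e_i)` is the unique solution of the
personalized PageRank equation `S = c • (Mᵀ *ᵥ S) + (1-c) • e_i`. -/
theorem ppr_unique_solution
    (n : ℕ) (M : Matrix (Fin n) (Fin n) ℝ)
    (hnn : ∀ i j, 0 ≤ M i j) (hrow : ∀ i, ∑ j, M i j = 1)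
    (c : ℝ) (hc0 : 0 < c) (hc1 : c < 1) (i : Fin n) :
    IsUnit (1 - c • Mᵀ) ∧
    ∀ S : Fin n → ℝ,
      S = c • (Mᵀ *ᵥ S) + (1 - c) • (Pi.single i 1 : Fin n → ℝ) ↔
        S = (1 - c) • ((1 - c • Mᵀ)⁻¹ *ᵥ (Pi.single i 1 : Fin n → ℝ)) := by
  have hunit : IsUnit (1 - c • Mᵀ) := by
    rw [← isUnit_transpose, transpose_sub, transpose_one, transpose_smul, transpose_transpose]
    exact M.isUnit_one_sub_smul_of_nonneg_of_sum_le_one hnn (fun k => (hrow k).le)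
      (abs_lt.mpr ⟨by linarith, hc1⟩)
  refine ⟨hunit, fun S => ?_⟩
  rw [eq_smul_mulVec_add_iff, mulVec_eq_iff_eq_inv_mulVec hunit, mulVec_smul]
end

section
/- Let M : Matrix (Fin n) (Fin n) ℝ have nonnegative entries with every row summing to 1 (row-stochastic), and let 0 < c < 1. For i : Fin n let S_i := (1−c) • ((1 − c • Mᵀ)⁻¹ *ᵥ e_i) and, for L : ℕ, let Ŝ_i^L := (1−c) • ((∑_{k=0}^{L} (c • Mᵀ)^k) *ᵥ e_i) be the cumulative power iteration truncation. Then Ŝ_i^L has nonnegative entries with ∑_{j} Ŝ_i^L j = 1 − c^{L+1}, the entries of S_i − Ŝ_i^L are nonnegative, and ∑_{j} |S_i j − Ŝ_i^L j| = c^{L+1}; in particular the cumulative power iteration converges to S_i as L → ∞. -/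
open Matrix Filter Topology Finset

/-!
Put `P = Mᵀ`, which is column-stochastic. The `k`-th term `c ^ k • (P ^ k *ᵥ eᵢ)` of the series
is a nonnegative vector of total mass `c ^ k`, so the truncations increase with `L` and have mass
`(1 - c)(1 + c + ⋯ + c ^ L) = 1 - c ^ (L + 1)`. The entries of `(c • P) ^ k` are at most `c ^ k`,
so `(c • P) ^ k → 0`; this alone makes `1 - c • P` invertible (as `det (1 - (c • P) ^ N) → 1`)
and the Neumann series converge to its inverse. Hence the truncations increase to `S`, whose mass
is `1` because `P` preserves mass, and the `ℓ¹` error is `1 - (1 - c ^ (L + 1))`.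
-/

namespace Matrix

variable {ι : Type*} [Fintype ι] [DecidableEq ι]

section Neumann

variable {K : Type*} [Field K] [TopologicalSpace K] [IsTopologicalRing K] [T1Space K]
  {A : Matrix ι ι K}

theorem isUnit_det_one_sub_of_tendsto_pow (hA : Tendsto (A ^ ·) atTop (𝓝 0)) :
    IsUnit (1 - A).det := by
  have hdet : Tendsto (fun N => (1 - A ^ N).det) atTop (𝓝 1) := by
    simpa [Function.comp_def] using ((continuous_id.matrix_det).tendsto _).comp
      ((tendsto_const_nhds (x := (1 : Matrix ι ι K))).sub hA)
  obtain ⟨N, hN⟩ := (hdet.eventually_ne one_ne_zero).exists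
  rw [← mul_neg_geom_sum, det_mul] at hN
  exact isUnit_iff_ne_zero.2 (left_ne_zero_of_mul hN)

theorem tendsto_sum_range_pow_nonsing_inv (hA : Tendsto (A ^ ·) atTop (𝓝 0)) :
    Tendsto (fun N => ∑ k ∈ range N, A ^ k) atTop (𝓝 (1 - A)⁻¹) := by
  have hsum (N : ℕ) : ∑ k ∈ range N, A ^ k = (1 - A)⁻¹ * (1 - A ^ N) := by
    rw [← mul_neg_geom_sum, ← Matrix.mul_assoc,
      nonsing_inv_mul _ (isUnit_det_one_sub_of_tendsto_pow hA), Matrix.one_mul]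
  simp only [hsum]
  simpa using ((tendsto_const_nhds (x := (1 : Matrix ι ι K))).sub hA).const_mul (1 - A)⁻¹

end Neumann

section ColStochastic

variable {R : Type*} [CommRing R]

theorem sum_range_smul_pow_mulVec (P : Matrix ι ι R) (c : R) (x : ι → R) (N : ℕ) :
    (∑ k ∈ range N, (c • P) ^ k) *ᵥ x = ∑ k ∈ range N, c ^ k • (P ^ k *ᵥ x) := by
  simp only [sum_mulVec, smul_pow, smul_mulVec]

variable [PartialOrder R] [IsOrderedRing R] {P : Matrix ι ι R} {x : ι → R} {c : R}

theorem monotone_sum_range_smul_pow_mulVec (hP : P ∈ colStochastic R ι) (hc : 0 ≤ c)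
    (hx : 0 ≤ x) : Monotone fun N => (∑ k ∈ range N, (c • P) ^ k) *ᵥ x := by
  refine monotone_nat_of_le_succ fun N => ?_
  simp only [sum_range_smul_pow_mulVec]
  rw [sum_range_succ]
  exact le_add_of_nonneg_right <|
    smul_nonneg (pow_nonneg hc N)
      (show 0 ≤ P ^ N *ᵥ x from nonneg_mulVec_of_mem_colStochastic (pow_mem hP N) hx)

theorem sum_range_smul_pow_mulVec_nonneg (hP : P ∈ colStochastic R ι) (hc : 0 ≤ c)
    (hx : 0 ≤ x) (N : ℕ) : 0 ≤ (∑ k ∈ range N, (c • P) ^ k) *ᵥ x := by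
  simpa using monotone_sum_range_smul_pow_mulVec hP hc hx (Nat.zero_le N)

theorem sum_sum_range_smul_pow_mulVec (hP : P ∈ colStochastic R ι) (x : ι → R) (N : ℕ) :
    ∑ j, ((∑ k ∈ range N, (c • P) ^ k) *ᵥ x) j = (∑ k ∈ range N, c ^ k) * ∑ j, x j := by
  simp only [sum_range_smul_pow_mulVec, Finset.sum_apply, Pi.smul_apply, smul_eq_mul]
  rw [Finset.sum_comm, Finset.sum_mul]
  refine Finset.sum_congr rfl fun k _ => ?_
  rw [← Finset.mul_sum, sum_mulVec_of_mem_colStochastic (pow_mem hP k)]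

theorem one_sub_mul_sum_nonsing_inv_mulVec (hP : P ∈ colStochastic R ι)
    (h : IsUnit (1 - c • P).det) (x : ι → R) :
    (1 - c) * ∑ j, ((1 - c • P)⁻¹ *ᵥ x) j = ∑ j, x j := by
  set y := (1 - c • P)⁻¹ *ᵥ x
  have hy : (1 - c • P) *ᵥ y = x := by
    rw [mulVec_mulVec, mul_nonsing_inv _ h, one_mulVec]
  conv_rhs => rw [← hy]
  simp only [sub_mulVec, one_mulVec, smul_mulVec, Pi.sub_apply, Pi.smul_apply, smul_eq_mul,
    Finset.sum_sub_distrib, ← Finset.mul_sum, sum_mulVec_of_mem_colStochastic hP]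
  ring

end ColStochastic

section Real

variable {P : Matrix ι ι ℝ} {c : ℝ} {x : ι → ℝ}

theorem tendsto_smul_pow_of_mem_colStochastic (hP : P ∈ colStochastic ℝ ι) (hc0 : 0 ≤ c)
    (hc1 : c < 1) : Tendsto ((c • P) ^ ·) atTop (𝓝 0) := by
  refine tendsto_pi_nhds.2 fun a => tendsto_pi_nhds.2 fun b => ?_
  simp only [smul_pow, smul_apply, smul_eq_mul]
  refine squeeze_zero (fun k => mul_nonneg (pow_nonneg hc0 k)
    (nonneg_of_mem_colStochastic (pow_mem hP k))) (fun k => ?_)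
    (tendsto_pow_atTop_nhds_zero_of_lt_one hc0 hc1)
  exact mul_le_of_le_one_right (pow_nonneg hc0 k) (le_one_of_mem_colStochastic (pow_mem hP k))

theorem tendsto_sum_range_smul_pow_mulVec (hP : P ∈ colStochastic ℝ ι) (hc0 : 0 ≤ c)
    (hc1 : c < 1) (x : ι → ℝ) :
    Tendsto (fun N => (∑ k ∈ range N, (c • P) ^ k) *ᵥ x) atTop (𝓝 ((1 - c • P)⁻¹ *ᵥ x)) :=
  ((continuous_id.matrix_mulVec continuous_const).tendsto _).comp
    (tendsto_sum_range_pow_nonsing_inv (tendsto_smul_pow_of_mem_colStochastic hP hc0 hc1))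

theorem sum_range_smul_pow_mulVec_le (hP : P ∈ colStochastic ℝ ι) (hc0 : 0 ≤ c) (hc1 : c < 1)
    (hx : 0 ≤ x) (N : ℕ) : (∑ k ∈ range N, (c • P) ^ k) *ᵥ x ≤ (1 - c • P)⁻¹ *ᵥ x :=
  (monotone_sum_range_smul_pow_mulVec hP hc0 hx).ge_of_tendsto
    (tendsto_sum_range_smul_pow_mulVec hP hc0 hc1 x) N

end Real

end Matrix

theorem ppr_cumulative_power_iteration_general
    (n : ℕ) (M : Matrix (Fin n) (Fin n) ℝ)
    (hnn : ∀ i j, 0 ≤ M i j) (hrow : ∀ i, ∑ j, M i j = 1)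
    (c : ℝ) (hc0 : 0 < c) (hc1 : c < 1) (i : Fin n)
    (S : Fin n → ℝ) (hS : S = (1 - c) • ((1 - c • Mᵀ)⁻¹ *ᵥ (Pi.single i 1 : Fin n → ℝ)))
    (Strunc : ℕ → Fin n → ℝ)
    (hStrunc : ∀ L : ℕ, Strunc L =
      (1 - c) • ((∑ k ∈ Finset.range (L + 1), (c • Mᵀ) ^ k) *ᵥ (Pi.single i 1 : Fin n → ℝ))) :
    (∀ (L : ℕ) (j : Fin n), 0 ≤ Strunc L j) ∧
    (∀ L : ℕ, ∑ j, Strunc L j = 1 - c ^ (L + 1)) ∧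
    (∀ (L : ℕ) (j : Fin n), 0 ≤ S j - Strunc L j) ∧
    (∀ L : ℕ, ∑ j, |S j - Strunc L j| = c ^ (L + 1)) ∧
    Filter.Tendsto Strunc Filter.atTop (nhds S) := by
  have hP : Mᵀ ∈ colStochastic ℝ (Fin n) :=
    transpose_mem_colStochastic_iff_mem_rowStochastic.2 (mem_rowStochastic_iff_sum.2 ⟨hnn, hrow⟩)
  have he : (0 : Fin n → ℝ) ≤ Pi.single i 1 := Pi.single_nonneg.2 zero_le_one
  have hc : 0 ≤ 1 - c := sub_nonneg.2 hc1.le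
  have hsum (L : ℕ) : ∑ j, Strunc L j = 1 - c ^ (L + 1) := by
    simp only [hStrunc, Pi.smul_apply, smul_eq_mul, ← Finset.mul_sum,
      sum_sum_range_smul_pow_mulVec hP, sum_pi_single', if_pos (mem_univ i), mul_one]
    exact mul_neg_geom_sum c (L + 1)
  have hle (L : ℕ) : Strunc L ≤ S := by
    rw [hS, hStrunc]
    exact smul_le_smul_of_nonneg_left (sum_range_smul_pow_mulVec_le hP hc0.le hc1 he _) hc
  have hSsum : ∑ j, S j = 1 := by
    simp only [hS, Pi.smul_apply, smul_eq_mul, ← Finset.mul_sum,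
      one_sub_mul_sum_nonsing_inv_mulVec hP <| isUnit_det_one_sub_of_tendsto_pow <|
        tendsto_smul_pow_of_mem_colStochastic hP hc0.le hc1]
    simp
  refine ⟨fun L => ?_, hsum, fun L j => sub_nonneg.2 (hle L j), fun L => ?_, ?_⟩
  · rw [hStrunc]
    exact smul_nonneg hc (sum_range_smul_pow_mulVec_nonneg hP hc0.le he _)
  · rw [Finset.sum_congr rfl fun j _ => abs_of_nonneg (sub_nonneg.2 (hle L j)),
      Finset.sum_sub_distrib, hSsum, hsum, sub_sub_cancel]
  · rw [hS, show Strunc = _ from funext hStrunc]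
    exact ((tendsto_sum_range_smul_pow_mulVec hP hc0.le hc1 _).comp
      (tendsto_add_atTop_nat 1)).const_smul (1 - c)

/-- For a row-stochastic matrix `M` and damping factor `0 < c < 1`, the cumulative power
iteration truncation `Ŝ_i^L = (1-c) • ((∑_{k=0}^{L} (c • Mᵀ)^k) *ᵥ e_i)` of the personalized
PageRank vector `S_i = (1-c) • ((1 - c • Mᵀ)⁻¹ *ᵥ e_i)` has nonnegative entries summing to
`1 - c^{L+1}`, approximates `S_i` from below, and satisfies
`∑_j |S_i j - Ŝ_i^L j| = c^{L+1}`; in particular it converges to `S_i` as `L → ∞`. -/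
theorem ppr_cumulative_power_iteration
    (n : ℕ) (hn : 0 < n) (M : Matrix (Fin n) (Fin n) ℝ)
    (hnn : ∀ i j, 0 ≤ M i j) (hrow : ∀ i, ∑ j, M i j = 1)
    (c : ℝ) (hc0 : 0 < c) (hc1 : c < 1) (i : Fin n)
    (S : Fin n → ℝ) (hS : S = (1 - c) • ((1 - c • Mᵀ)⁻¹ *ᵥ (Pi.single i 1 : Fin n → ℝ)))
    (Strunc : ℕ → Fin n → ℝ)
    (hStrunc : ∀ L : ℕ, Strunc L =
      (1 - c) • ((∑ k ∈ Finset.range (L + 1), (c • Mᵀ) ^ k) *ᵥ (Pi.single i 1 : Fin n → ℝ))) :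
    (∀ (L : ℕ) (j : Fin n), 0 ≤ Strunc L j) ∧
    (∀ L : ℕ, ∑ j, Strunc L j = 1 - c ^ (L + 1)) ∧
    (∀ (L : ℕ) (j : Fin n), 0 ≤ S j - Strunc L j) ∧
    (∀ L : ℕ, ∑ j, |S j - Strunc L j| = c ^ (L + 1)) ∧
    Filter.Tendsto Strunc Filter.atTop (nhds S) :=
  ppr_cumulative_power_iteration_general n M hnn hrow c hc0 hc1 i S hS Strunc hStrunc
end
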